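/- For positive reals λ_BS, λ_e and α > 0: ∫₀^∞ exp(-πλ_BS D₀²·2^{-2t/α})/(1 + (λ_e/λ_BS)·2^{2t/α}) dt = (α/(2 ln 2))·exp(πλ_e D₀²)·[E₁(πλ_e D₀²) - E₁(π(λ_e + λ_BS)D₀²)], where E₁ is the exponential integral and D₀ > 0. -/

import Mathlib

/-!
With `k = 2 log 2 / α` one has `2^(2t/α) = e^(kt)`. Writing `a = π λ_e D₀²` and `c = π λ_BS D₀²`,
the integrand becomes `k⁻¹ e^a · |φ'(t)| · e^(-φ t) / φ t` for `φ t = a + c e^(-kt)`, and `φ` maps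
`(0, ∞)` injectively onto `(a, a + c)`. The substitution `s = φ t` turns the integral into
`k⁻¹ e^a ∫_a^(a+c) e^(-s)/s ds = k⁻¹ e^a (E₁ a - E₁ (a + c))`.
-/

open MeasureTheory Real

/-- The exponential integral `E₁(x) = ∫ₓ^∞ e^{-t}/t dt`. -/
noncomputable def expIntegralE1 (x : ℝ) : ℝ := ∫ t in Set.Ioi x, Real.exp (-t) / t

open Set

lemma integrableOn_exp_neg_div_Ioi {a : ℝ} (ha : 0 < a) :
    IntegrableOn (fun s => exp (-s) / s) (Ioi a) := by
  have hdom : IntegrableOn (fun s => exp (-s) * a⁻¹) (Ioi a) := by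
    simpa [IntegrableOn] using (exp_neg_integrableOn_Ioi a one_pos).mul_const a⁻¹
  refine hdom.mono' ?_ ?_
  · exact (continuous_exp.comp continuous_neg).measurable.div measurable_id |>.aestronglyMeasurable
  · filter_upwards [self_mem_ae_restrict measurableSet_Ioi] with s (hs : a < s)
    rw [norm_div, norm_of_nonneg (exp_pos _).le, norm_of_nonneg (ha.trans hs).le, div_eq_mul_inv]
    gcongr

lemma expIntegralE1_sub_eq_integral_Ioo {a b : ℝ} (ha : 0 < a) (hab : a ≤ b) :
    expIntegralE1 a - expIntegralE1 b = ∫ s in Ioo a b, exp (-s) / s := by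
  rw [expIntegralE1, expIntegralE1,
    intervalIntegral.integral_Ioi_sub_Ioi (integrableOn_exp_neg_div_Ioi ha) hab,
    intervalIntegral.integral_of_le hab, integral_Ioc_eq_integral_Ioo]

lemma image_neg_mul_Ioi_zero {k : ℝ} (hk : 0 < k) :
    (fun t : ℝ => -(k * t)) '' Ioi 0 = Iio 0 := by
  ext x
  constructor
  · rintro ⟨t, ht, rfl⟩
    simpa using mul_pos hk ht
  · intro hx
    exact ⟨-x / k, div_pos (neg_pos.2 hx) hk, by field_simp⟩

lemma image_add_mul_exp_neg_Ioi_zero (a : ℝ) {c k : ℝ} (hc : 0 < c) (hk : 0 < k) :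
    (fun t => a + c * exp (-(k * t))) '' Ioi 0 = Ioo a (a + c) := by
  have h := image_affine_Ioo hc a 0 1
  rw [← exp_zero, ← image_exp_Iio, ← image_neg_mul_Ioi_zero hk, image_image, image_image] at h
  simpa [add_comm] using h

lemma integral_Ioi_add_mul_exp_neg_smul {E : Type*} [NormedAddCommGroup E] [NormedSpace ℝ E]
    (g : ℝ → E) (a : ℝ) {c k : ℝ} (hc : 0 < c) (hk : 0 < k) :
    ∫ t in Ioi 0, (c * k * exp (-(k * t))) • g (a + c * exp (-(k * t)))
      = ∫ s in Ioo a (a + c), g s := by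
  have hderiv (t : ℝ) : HasDerivAt (fun t => a + c * exp (-(k * t)))
      (-(c * k * exp (-(k * t)))) t := by
    have := (((hasDerivAt_id t).const_mul (-k)).exp.const_mul c).const_add a
    simp only [id, neg_mul, mul_one] at this
    exact this.congr_deriv (by ring)
  have hinj : Function.Injective (fun t => a + c * exp (-(k * t))) :=
    (add_right_injective a).comp <| (mul_right_injective₀ hc.ne').comp <|
      exp_injective.comp <| neg_injective.comp (mul_right_injective₀ hk.ne')
  rw [← image_add_mul_exp_neg_Ioi_zero a hc hk, integral_image_eq_integral_abs_deriv_smul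
    measurableSet_Ioi (fun t _ => (hderiv t).hasDerivWithinAt) hinj.injOn]
  congr with t
  rw [abs_neg, abs_of_pos (by positivity)]

lemma exp_neg_mul_div_one_add_div_mul_inv {a c u : ℝ} (ha : 0 ≤ a) (hc : 0 < c) (hu : 0 < u) :
    exp (-(c * u)) / (1 + a / c * u⁻¹)
      = exp a * (c * u) * (exp (-(a + c * u)) / (a + c * u)) := by
  have hs : 0 < a + c * u := by positivity
  rw [neg_add, exp_add, exp_neg a]
  field_simp
  ring

theorem stmt_10 (lBS le D₀ α : ℝ) (hBS : 0 < lBS) (he : 0 < le) (hD : 0 < D₀)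
    (hα : 0 < α) :
    ∫ t in Set.Ioi (0:ℝ),
      Real.exp (-(π * lBS * D₀ ^ 2 * (2:ℝ) ^ (-(2 * t / α)))) /
        (1 + (le / lBS) * (2:ℝ) ^ (2 * t / α))
    = α / (2 * Real.log 2) * Real.exp (π * le * D₀ ^ 2) *
        (expIntegralE1 (π * le * D₀ ^ 2) - expIntegralE1 (π * (le + lBS) * D₀ ^ 2)) := by
  set a := π * le * D₀ ^ 2
  set c := π * lBS * D₀ ^ 2
  set k := 2 * log 2 / α
  have ha : 0 < a := by positivity
  have hc : 0 < c := by positivity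
  have hk : 0 < k := div_pos (mul_pos two_pos (log_pos one_lt_two)) hα
  have hratio : le / lBS = a / c := by
    rw [div_eq_div_iff hBS.ne' hc.ne']; simp only [a, c]; ring
  have hsum : π * (le + lBS) * D₀ ^ 2 = a + c := by ring
  have hpow (x : ℝ) : (2 : ℝ) ^ (2 * x / α) = exp (k * x) := by
    rw [rpow_def_of_pos two_pos]; simp only [k]; ring_nf
  have hintegrand (t : ℝ) :
      exp (-(c * 2 ^ (-(2 * t / α)))) / (1 + le / lBS * 2 ^ (2 * t / α))
        = (k⁻¹ * exp a) * ((c * k * exp (-(k * t))) *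
            (exp (-(a + c * exp (-(k * t)))) / (a + c * exp (-(k * t))))) := by
    have hinv : exp (k * t) = (exp (-(k * t)))⁻¹ := by rw [exp_neg, inv_inv]
    rw [rpow_neg two_pos.le, hpow, hratio, ← exp_neg, hinv,
      exp_neg_mul_div_one_add_div_mul_inv ha.le hc (exp_pos _)]
    field_simp
  calc _ = ∫ t in Ioi 0, (k⁻¹ * exp a) * ((c * k * exp (-(k * t))) *
            (exp (-(a + c * exp (-(k * t)))) / (a + c * exp (-(k * t))))) :=
        setIntegral_congr_fun measurableSet_Ioi fun t _ => hintegrand t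
    _ = k⁻¹ * exp a * ∫ s in Ioo a (a + c), exp (-s) / s := by
        rw [integral_const_mul]
        congr 1
        exact integral_Ioi_add_mul_exp_neg_smul (fun s => exp (-s) / s) a hc hk
    _ = _ := by
        rw [hsum, expIntegralE1_sub_eq_integral_Ioo ha (le_add_of_nonneg_right hc.le), inv_div]
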